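/- arXiv:1107.0461 — 2 statements merged into one kernel-verified Lean document; each statement's English description precedes it below -/
import Mathlib

section
/- Let a : ℝ → ℝ be smooth with a'(r) ≠ 0 for all r ∈ ℝ, let α, β, ε ∈ ℝ, and let h : ℝ → ℝ be smooth with h'' = a (so h''' = a', h'''' = a'', etc.). Define the smooth functions c = α/a', p = β/(2a') − (3α²/10)·a''/(a')³, and σ = α²·( (2/5)·(a'')³/(a')⁵ − (7/20)·a''·a'''/(a')⁴ + (1/24)·a''''/(a')³ ) − (β/12)·( (a'')²/(a')³ − a'''/(a')² ). Define the density h̃(r, q, w) = h(r) − (ε²/2) c(r) h'''(r) q² + ε⁴[ ( p(r) h'''(r) + (3/10) c(r)² h''''(r) ) w² − ( (c(r)c''(r)/8) h''''(r) + (c(r)c'(r)/8) h⁽⁵⁾(r) + (c(r)²/24) h⁽⁶⁾(r) + (p'(r)/6) h''''(r) + (p(r)/6) h⁽⁵⁾(r) − σ(r) h'''(r) ) q⁴ ]. Then for every smooth u : ℝ → ℝ and every x ∈ ℝ one has the identity d/dx [ (∂h̃/∂r)(u,u',u'') − d/dx( (∂h̃/∂q)(u,u',u'') ) + d²/dx²(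 (∂h̃/∂w)(u,u',u'') ) ] = a(u(x)) u'(x) + ε² α u'''(x) + ε⁴ β u⁽⁵⁾(x). In other words, the generalized KdV equation u_t = a(u)u_x + ε²α u_xxx + ε⁴β u_xxxxx coincides with the Hamiltonian equation u_t = ∂_x (δH̃/δu) for the Hamiltonian H̃ = ∫ h̃(u,u_x,u_xx) dx with the above choice of c, p, σ. -/
set_option maxHeartbeats 2000000
open scoped ContDiff


/-!
STATEMENT 6 (Lemma `lem:borisvsus` of the paper): with the choice of the functions
`c`, `p`, `s` given by `eq:parameters`, the generalized KdV equation
`u_t = a(u)u_x + ε²α u_xxx + ε⁴β u_xxxxx` coincides with the Hamiltonian equation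
`u_t = ∂ₓ(δH̃/δu)` for the Hamiltonian `H̃ = ∫ h̃(u,u_x,u_xx) dx` of normal form
`eq:normham`.
-/

/-- Let `a` be smooth with nonvanishing derivative, `h'' = a`, and define
`c = α/a'`, `p`, `σ` by the formulas `eq:parameters`, and let `h̃(r,q,w)` be the density
of the normal-form Hamiltonian. Then for every smooth `u : ℝ → ℝ`,
`d/dx (δH̃/δu)|_{u} = a(u)u' + ε²α u''' + ε⁴β u⁽⁵⁾`, where
`δH̃/δu = (∂h̃/∂r)(u,u',u'') − d/dx((∂h̃/∂q)(u,u',u'')) + d²/dx²((∂h̃/∂w)(u,u',u''))`. -/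
theorem genKdV_is_hamiltonian_perturbation
    (a : ℝ → ℝ) (ha : ContDiff ℝ (⊤ : ℕ∞) a) (ha' : ∀ r : ℝ, deriv a r ≠ 0)
    (α β ε : ℝ)
    (h : ℝ → ℝ) (hh : ContDiff ℝ (⊤ : ℕ∞) h) (hha : iteratedDeriv 2 h = a)
    (c p σ : ℝ → ℝ)
    (hc : ∀ r : ℝ, c r = α / deriv a r)
    (hp : ∀ r : ℝ, p r = β / (2 * deriv a r)
      - (3 * α^2 / 10) * iteratedDeriv 2 a r / (deriv a r)^3)
    (hσ : ∀ r : ℝ, σ r = α^2 * ((2/5) * (iteratedDeriv 2 a r)^3 / (deriv a r)^5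
        - (7/20) * iteratedDeriv 2 a r * iteratedDeriv 3 a r / (deriv a r)^4
        + (1/24) * iteratedDeriv 4 a r / (deriv a r)^3)
      - (β/12) * ((iteratedDeriv 2 a r)^2 / (deriv a r)^3
        - iteratedDeriv 3 a r / (deriv a r)^2))
    (htilde : ℝ → ℝ → ℝ → ℝ)
    (hht : ∀ r q w : ℝ, htilde r q w =
      h r - (ε^2 / 2) * c r * iteratedDeriv 3 h r * q^2
      + ε^4 * ((p r * iteratedDeriv 3 h r + (3/10) * (c r)^2 * iteratedDeriv 4 h r) * w^2
        - ((c r * iteratedDeriv 2 c r / 8) * iteratedDeriv 4 h r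
          + (c r * deriv c r / 8) * iteratedDeriv 5 h r
          + ((c r)^2 / 24) * iteratedDeriv 6 h r
          + (deriv p r / 6) * iteratedDeriv 4 h r
          + (p r / 6) * iteratedDeriv 5 h r
          - σ r * iteratedDeriv 3 h r) * q^4)) :
    ∀ u : ℝ → ℝ, ContDiff ℝ (⊤ : ℕ∞) u → ∀ x : ℝ,
      deriv (fun y : ℝ =>
        deriv (fun r => htilde r (deriv u y) (iteratedDeriv 2 u y)) (u y)
        - deriv (fun z : ℝ =>
            deriv (fun q => htilde (u z) q (iteratedDeriv 2 u z)) (deriv u z)) y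
        + deriv (deriv (fun z : ℝ =>
            deriv (fun w => htilde (u z) (deriv u z) w) (iteratedDeriv 2 u z))) y) x
      = a (u x) * deriv u x + ε^2 * α * iteratedDeriv 3 u x
        + ε^4 * β * iteratedDeriv 5 u x := by
  
  intro u hu x
  -- toolbox
  have smooth_deriv : ∀ f : ℝ → ℝ, ContDiff ℝ ∞ f → ContDiff ℝ ∞ (deriv f) :=
    fun f hf => (contDiff_infty_iff_deriv.mp hf).2
  have diff_of : ∀ f : ℝ → ℝ, ContDiff ℝ ∞ f → Differentiable ℝ f :=
    fun f hf => hf.differentiable (by norm_num)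
  have ha0 : ContDiff ℝ ∞ a := ha.of_le (by simp)
  have hA1 : ContDiff ℝ ∞ (deriv a) := smooth_deriv _ ha0
  have hA2 : ContDiff ℝ ∞ (deriv (deriv a)) := smooth_deriv _ hA1
  have hA3 : ContDiff ℝ ∞ (deriv (deriv (deriv a))) := smooth_deriv _ hA2
  have hA1d : ∀ r, HasDerivAt (deriv a) (deriv (deriv a) r) r :=
    fun r => (diff_of _ hA1 r).hasDerivAt
  have hA2d : ∀ r, HasDerivAt (deriv (deriv a)) (deriv (deriv (deriv a)) r) r :=
    fun r => (diff_of _ hA2 r).hasDerivAt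
  have hu0 : ContDiff ℝ ∞ u := hu.of_le (by simp)
  have hu1 : ContDiff ℝ ∞ (deriv u) := smooth_deriv _ hu0
  have hu2 : ContDiff ℝ ∞ (deriv (deriv u)) := smooth_deriv _ hu1
  have hu3 : ContDiff ℝ ∞ (deriv (deriv (deriv u))) := smooth_deriv _ hu2
  have hu4 : ContDiff ℝ ∞ (deriv (deriv (deriv (deriv u)))) := smooth_deriv _ hu3
  have hh0 : ContDiff ℝ ∞ h := hh.of_le (by simp)
  -- iterated derivatives as repeated derivs
  have hid2 : ∀ f : ℝ → ℝ, iteratedDeriv 2 f = deriv (deriv f) := by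
    intro f; simp [iteratedDeriv_succ, iteratedDeriv_one]
  have hid3 : ∀ f : ℝ → ℝ, iteratedDeriv 3 f = deriv (deriv (deriv f)) := by
    intro f; simp [iteratedDeriv_succ, iteratedDeriv_one]
  have hid4 : ∀ f : ℝ → ℝ, iteratedDeriv 4 f = deriv (deriv (deriv (deriv f))) := by
    intro f; simp [iteratedDeriv_succ, iteratedDeriv_one]
  have hid5 : ∀ f : ℝ → ℝ, iteratedDeriv 5 f = deriv (deriv (deriv (deriv (deriv f)))) := by
    intro f; simp [iteratedDeriv_succ, iteratedDeriv_one]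
  have hid6 : ∀ f : ℝ → ℝ,
      iteratedDeriv 6 f = deriv (deriv (deriv (deriv (deriv (deriv f))))) := by
    intro f; simp [iteratedDeriv_succ, iteratedDeriv_one]
  have hdh : deriv (deriv h) = a := by rw [← hha, hid2]
  -- function forms of c and p
  have hcf : c = fun r => α / deriv a r := funext hc
  have hpf2 : p = fun r => β / (2 * deriv a r)
      - 3 * α ^ 2 / 10 * deriv (deriv a) r / deriv a r ^ 3 := by
    funext r; rw [hp r, hid2]
  -- first derivative of c (as a function)
  have dc1f : deriv (fun r => α / deriv a r)
      = fun r => (0 * deriv a r - α * deriv (deriv a) r) / deriv a r ^ 2 :=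
    funext fun r => ((hasDerivAt_const r α).div (hA1d r) (ha' r)).deriv
  -- second derivative of c (HasDerivAt at a point)
  have dc2 : ∀ r : ℝ, HasDerivAt
      (fun r => (0 * deriv a r - α * deriv (deriv a) r) / deriv a r ^ 2)
      (((0 * deriv (deriv a) r - α * deriv (deriv (deriv a)) r) * deriv a r ^ 2
        - (0 * deriv a r - α * deriv (deriv a) r) * (2 * deriv a r ^ 1 * deriv (deriv a) r))
        / (deriv a r ^ 2) ^ 2) r := by
    intro r
    exact (((hA1d r).const_mul 0).sub ((hA2d r).const_mul α)).div
      ((hA1d r).pow 2) (pow_ne_zero 2 (ha' r))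
  -- derivative of p
  have dp : ∀ r : ℝ, HasDerivAt
      (fun r => β / (2 * deriv a r) - 3 * α ^ 2 / 10 * deriv (deriv a) r / deriv a r ^ 3)
      ((0 * (2 * deriv a r) - β * (2 * deriv (deriv a) r)) / (2 * deriv a r) ^ 2
        - (3 * α ^ 2 / 10 * deriv (deriv (deriv a)) r * deriv a r ^ 3
          - 3 * α ^ 2 / 10 * deriv (deriv a) r * (3 * deriv a r ^ 2 * deriv (deriv a) r))
          / (deriv a r ^ 3) ^ 2) r := by
    intro r
    exact ((hasDerivAt_const r β).div ((hA1d r).const_mul 2)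
        (mul_ne_zero two_ne_zero (ha' r))).sub
      ((((hA2d r).const_mul (3 * α ^ 2 / 10)).div ((hA1d r).pow 3)
        (pow_ne_zero 3 (ha' r))))
  -- the key simplification of the density
  have key : ∀ r q w : ℝ, htilde r q w
      = h r - ε ^ 2 * α / 2 * q ^ 2 + ε ^ 4 * β / 2 * w ^ 2 := by
    intro r q w
    rw [hht r q w]
    simp only [hid2, hid3, hid4, hid5, hid6, hdh, hσ, hcf, hpf2]
    simp only [dc1f]
    rw [(dc2 r).deriv, (dp r).deriv]
    have hA := ha' r
    revert hA
    generalize h r = H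
    generalize deriv (deriv (deriv (deriv a))) r = A4
    generalize deriv (deriv (deriv a)) r = A3
    generalize deriv (deriv a) r = A2
    generalize deriv a r = A1
    intro hA
    field_simp [hA]
    ring
  -- rewrite the goal using the simplified density
  simp only [hid2, hid3, hid5]
  simp only [key]
  have L1 : ∀ Q W yy : ℝ,
      deriv (fun r => h r - ε ^ 2 * α / 2 * Q ^ 2 + ε ^ 4 * β / 2 * W ^ 2) yy = deriv h yy := by
    intro Q W yy
    exact ((((diff_of _ hh0 yy).hasDerivAt).sub_const _).add_const _).deriv
  have L2 : ∀ R W Q : ℝ,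
      deriv (fun q => R - ε ^ 2 * α / 2 * q ^ 2 + ε ^ 4 * β / 2 * W ^ 2) Q
        = -(ε ^ 2 * α) * Q := by
    intro R W Q
    rw [HasDerivAt.deriv (f := fun q => R - ε ^ 2 * α / 2 * q ^ 2 + ε ^ 4 * β / 2 * W ^ 2) (((hasDerivAt_const Q R).sub ((hasDerivAt_pow 2 Q).const_mul (ε ^ 2 * α / 2))).add_const
      (ε ^ 4 * β / 2 * W ^ 2))]
    push_cast
    ring
  have L3 : ∀ R Q W : ℝ,
      deriv (fun w => R - ε ^ 2 * α / 2 * Q ^ 2 + ε ^ 4 * β / 2 * w ^ 2) W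
        = ε ^ 4 * β * W := by
    intro R Q W
    rw [(((hasDerivAt_pow 2 W).const_mul (ε ^ 4 * β / 2)).const_add
      (R - ε ^ 2 * α / 2 * Q ^ 2)).deriv]
    push_cast
    ring
  simp only [L1, L2, L3]
  have M2 : ∀ y : ℝ, deriv (fun z => -(ε ^ 2 * α) * deriv u z) y
      = -(ε ^ 2 * α) * deriv (deriv u) y :=
    fun y => (((diff_of _ hu1 y).hasDerivAt).const_mul _).deriv
  have M3a : deriv (fun z => ε ^ 4 * β * deriv (deriv u) z)
      = fun z => ε ^ 4 * β * deriv (deriv (deriv u)) z :=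
    funext fun z => (((diff_of _ hu2 z).hasDerivAt).const_mul _).deriv
  have M3b : ∀ y : ℝ, deriv (fun z => ε ^ 4 * β * deriv (deriv (deriv u)) z) y
      = ε ^ 4 * β * deriv (deriv (deriv (deriv u))) y :=
    fun y => (((diff_of _ hu3 y).hasDerivAt).const_mul _).deriv
  simp only [M2, M3a, M3b]
  have T1 : HasDerivAt (fun y => deriv h (u y)) (deriv (deriv h) (u x) * deriv u x) x :=
    ((diff_of _ (smooth_deriv _ hh0) (u x)).hasDerivAt).comp x ((diff_of _ hu0 x).hasDerivAt)
  have T2 : HasDerivAt (fun y => -(ε ^ 2 * α) * deriv (deriv u) y)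
      (-(ε ^ 2 * α) * deriv (deriv (deriv u)) x) x :=
    ((diff_of _ hu2 x).hasDerivAt).const_mul _
  have T3 : HasDerivAt (fun y => ε ^ 4 * β * deriv (deriv (deriv (deriv u))) y)
      (ε ^ 4 * β * deriv (deriv (deriv (deriv (deriv u)))) x) x :=
    ((diff_of _ hu4 x).hasDerivAt).const_mul _
  rw [HasDerivAt.deriv (f := fun y => deriv h (u y) - -(ε ^ 2 * α) * deriv (deriv u) y + ε ^ 4 * β * deriv (deriv (deriv (deriv u))) y) ((T1.sub T2).add T3), hdh]
  ring
end

section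
/- Let a, c : ℝ → ℝ be smooth functions, let 0 < t_c ≤ ∞, and let v : ℝ × [0,t_c) → ℝ be a smooth function satisfying ∂_t v = a(v) ∂_x v on ℝ × [0,t_c) and such that 1 + t·a'(v(x,t))·∂_x v(x,t) > 0 for all (x,t) ∈ ℝ × [0,t_c). Define v¹ : ℝ × [0,t_c) → ℝ by v¹(x,t) = (t/2)·∂_x[ ( (c'a' + ca'')(v)·(∂_x v)² + 2 c(v) a'(v) ∂_x² v + t·c(v)·a'(v)²·(∂_x v)(∂_x² v) + t·c'(v)·a'(v)²·(∂_x v)³ ) / (1 + t·a'(v)·∂_x v)² ], where all functions a, a', a'', c, c' are evaluated at v(x,t). Then v¹(x,0) = 0 for all x ∈ ℝ, and v¹ solves the first transport equation ∂_t v¹ = ∂_x( a(v) v¹ + c(v) a'(v) ∂_x² v + ½ (c(v) a''(v) + c'(v) a'(v)) (∂_x v)² ) on ℝ × [0,t_c). -/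
open scoped ENNReal
open scoped ContDiff
open Set
set_option maxHeartbeats 3000000

section Helpers

lemma sliceX {S : Set ℝ} {ψ : ℝ × ℝ → ℝ} {x t : ℝ}
    (hψ : DifferentiableWithinAt ℝ ψ ((Set.univ : Set ℝ) ×ˢ S) (x, t)) (ht : t ∈ S) :
    HasDerivAt (fun y => ψ (y, t)) (fderivWithin ℝ ψ ((Set.univ : Set ℝ) ×ˢ S) (x, t) (1, 0)) x := by
  have hcurve : HasDerivWithinAt (fun y : ℝ => (y, t)) ((1 : ℝ), (0 : ℝ)) Set.univ x :=
    ((hasDerivAt_id x).prodMk (hasDerivAt_const x t)).hasDerivWithinAt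
  have h := hψ.hasFDerivWithinAt.comp_hasDerivWithinAt x hcurve
      (fun y _ => (⟨trivial, ht⟩ : (y, t) ∈ (Set.univ : Set ℝ) ×ˢ S))
  rw [hasDerivWithinAt_univ] at h
  exact h

lemma sliceT {S : Set ℝ} {ψ : ℝ × ℝ → ℝ} {x t : ℝ}
    (hψ : DifferentiableWithinAt ℝ ψ ((Set.univ : Set ℝ) ×ˢ S) (x, t)) :
    HasDerivWithinAt (fun τ => ψ (x, τ)) (fderivWithin ℝ ψ ((Set.univ : Set ℝ) ×ˢ S) (x, t) (0, 1)) S t := by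
  have hcurve : HasDerivWithinAt (fun τ : ℝ => (x, τ)) ((0 : ℝ), (1 : ℝ)) S t :=
    ((hasDerivAt_const t x).prodMk (hasDerivAt_id t)).hasDerivWithinAt
  exact hψ.hasFDerivWithinAt.comp_hasDerivWithinAt t hcurve (fun τ hτ => ⟨trivial, hτ⟩)

lemma D1smooth {S : Set ℝ} {ψ : ℝ × ℝ → ℝ} (hψ : ContDiffOn ℝ ∞ ψ ((Set.univ : Set ℝ) ×ˢ S))
    (hud : UniqueDiffOn ℝ ((Set.univ : Set ℝ) ×ˢ S)) (w : ℝ × ℝ) :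
    ContDiffOn ℝ ∞ (fun q => fderivWithin ℝ ψ ((Set.univ : Set ℝ) ×ˢ S) q w) ((Set.univ : Set ℝ) ×ˢ S) :=
  (hψ.fderivWithin hud (by norm_num)).clm_apply contDiffOn_const

lemma swapD {S : Set ℝ} {ψ : ℝ × ℝ → ℝ} {x t : ℝ}
    (hψ : ContDiffOn ℝ ∞ ψ ((Set.univ : Set ℝ) ×ˢ S))
    (hud : UniqueDiffOn ℝ ((Set.univ : Set ℝ) ×ˢ S))
    (hcl : (x, t) ∈ closure (interior ((Set.univ : Set ℝ) ×ˢ S))) (ht : t ∈ S) :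
    fderivWithin ℝ (fun q => fderivWithin ℝ ψ ((Set.univ : Set ℝ) ×ˢ S) q (1, 0)) ((Set.univ : Set ℝ) ×ˢ S) (x, t) (0, 1)
    = fderivWithin ℝ (fun q => fderivWithin ℝ ψ ((Set.univ : Set ℝ) ×ˢ S) q (0, 1)) ((Set.univ : Set ℝ) ×ˢ S) (x, t) (1, 0) := by
  have hp : (x, t) ∈ (Set.univ : Set ℝ) ×ˢ S := ⟨trivial, ht⟩
  have hsym := (hψ.contDiffWithinAt hp).isSymmSndFDerivWithinAt (by simp [minSmoothness_of_isRCLikeNormedField]; exact WithTop.coe_le_coe.2 le_top) hud hcl hp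
  have hdiff : DifferentiableWithinAt ℝ (fderivWithin ℝ ψ ((Set.univ : Set ℝ) ×ˢ S)) ((Set.univ : Set ℝ) ×ˢ S) (x, t) := by
    have := (hψ.fderivWithin hud (m := 1) (by exact WithTop.coe_le_coe.2 le_top)).differentiableOn (by decide)
    exact this _ hp
  have e1 : ∀ w u : ℝ × ℝ, fderivWithin ℝ (fun q => fderivWithin ℝ ψ ((Set.univ : Set ℝ) ×ˢ S) q w) ((Set.univ : Set ℝ) ×ˢ S) (x, t) u
      = fderivWithin ℝ (fderivWithin ℝ ψ ((Set.univ : Set ℝ) ×ˢ S)) ((Set.univ : Set ℝ) ×ˢ S) (x, t) u w := by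
    intro w u
    rw [fderivWithin_clm_apply (hud _ hp) hdiff (differentiableWithinAt_const w),
      fderivWithin_const_apply w]
    simp
  rw [e1, e1]
  exact hsym _ _

end Helpers

/-- Let `v` be a smooth solution of the conservation law
`∂ₜv = a(v)∂ₓv` on `ℝ × [0,t_c)` with `1 + t a'(v) ∂ₓv > 0` there, and define `v¹` by the
explicit formula `eq:v1` of the paper. Then `v¹(·,0) = 0` and `v¹` solves the first
transport equation `∂ₜv¹ = ∂ₓ( a(v)v¹ + c(v)a'(v)∂ₓ²v + ½(c(v)a''(v)+c'(v)a'(v))(∂ₓv)² )`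
on `ℝ × [0,t_c)`. -/
theorem transport_equation_explicit_solution
    (a c : ℝ → ℝ) (ha : ContDiff ℝ (⊤ : ℕ∞) a) (hc : ContDiff ℝ (⊤ : ℕ∞) c)
    (tc : ℝ≥0∞) (htc : 0 < tc)
    (v : ℝ → ℝ → ℝ)
    (hsmooth : ContDiffOn ℝ (⊤ : ℕ∞) (fun p : ℝ × ℝ => v p.1 p.2)
      {p : ℝ × ℝ | 0 ≤ p.2 ∧ ENNReal.ofReal p.2 < tc})
    (hpde : ∀ x t : ℝ, 0 ≤ t → ENNReal.ofReal t < tc →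
      HasDerivWithinAt (fun τ => v x τ) (a (v x t) * deriv (fun y => v y t) x)
        {τ : ℝ | 0 ≤ τ ∧ ENNReal.ofReal τ < tc} t)
    (hpos : ∀ x t : ℝ, 0 ≤ t → ENNReal.ofReal t < tc →
      0 < 1 + t * deriv a (v x t) * deriv (fun y => v y t) x)
    (v1 : ℝ → ℝ → ℝ)
    (hv1 : ∀ x t : ℝ, v1 x t = (t/2) * deriv (fun y : ℝ =>
      ((deriv c (v y t) * deriv a (v y t) + c (v y t) * iteratedDeriv 2 a (v y t))
          * (deriv (fun z => v z t) y)^2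
        + 2 * c (v y t) * deriv a (v y t) * iteratedDeriv 2 (fun z => v z t) y
        + t * c (v y t) * (deriv a (v y t))^2
          * deriv (fun z => v z t) y * iteratedDeriv 2 (fun z => v z t) y
        + t * deriv c (v y t) * (deriv a (v y t))^2 * (deriv (fun z => v z t) y)^3)
      / (1 + t * deriv a (v y t) * deriv (fun z => v z t) y)^2) x) :
    (∀ x : ℝ, v1 x 0 = 0) ∧
    (∀ x t : ℝ, 0 ≤ t → ENNReal.ofReal t < tc →
      HasDerivWithinAt (fun τ => v1 x τ)
        (deriv (fun y : ℝ =>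
          a (v y t) * v1 y t
          + c (v y t) * deriv a (v y t) * iteratedDeriv 2 (fun z => v z t) y
          + (1/2) * (c (v y t) * iteratedDeriv 2 a (v y t)
              + deriv c (v y t) * deriv a (v y t)) * (deriv (fun z => v z t) y)^2) x)
        {τ : ℝ | 0 ≤ τ ∧ ENNReal.ofReal τ < tc} t) := by
  constructor
  · intro x; rw [hv1 x 0]; norm_num
  · intro x t ht0 htlt
    have ha' : ContDiff ℝ ∞ a := ha.of_le (by simp)
    have hc' : ContDiff ℝ ∞ c := hc.of_le (by simp)
    have hone : ((⊤ : ℕ∞) : WithTop ℕ∞) ≠ 0 := by simp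
    set S : Set ℝ := {τ : ℝ | 0 ≤ τ ∧ ENNReal.ofReal τ < tc} with hSdef
    have hSmem : ∀ τ : ℝ, τ ∈ S ↔ 0 ≤ τ ∧ ENNReal.ofReal τ < tc := fun τ => Iff.rfl
    have ht : t ∈ S := ⟨ht0, htlt⟩
    have hScases : (S = Set.Ico (0:ℝ) tc.toReal ∧ 0 < tc.toReal) ∨ S = Set.Ici (0:ℝ) := by
      by_cases htop : tc = ⊤
      · right; ext τ; simp [hSdef, htop]
      · left
        refine ⟨?_, ENNReal.toReal_pos htc.ne' htop⟩
        ext τ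
        simp only [hSdef, Set.mem_setOf_eq, Set.mem_Ico]
        constructor
        · rintro ⟨h1, h2⟩
          exact ⟨h1, by rwa [ENNReal.ofReal_lt_iff_lt_toReal h1 htop] at h2⟩
        · rintro ⟨h1, h2⟩
          exact ⟨h1, by rwa [ENNReal.ofReal_lt_iff_lt_toReal h1 htop]⟩
    have hudS : UniqueDiffOn ℝ S := by
      rcases hScases with ⟨h, -⟩ | h
      · rw [h]; exact uniqueDiffOn_Ico 0 _
      · rw [h]; exact uniqueDiffOn_Ici 0
    have hclS : ∀ τ ∈ S, τ ∈ closure (interior S) := by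
      rcases hScases with ⟨h, hT⟩ | h
      · intro τ hτ; rw [h] at hτ ⊢
        rw [interior_Ico, closure_Ioo hT.ne]
        exact Set.Ico_subset_Icc_self hτ
      · intro τ hτ; rw [h] at hτ ⊢
        rw [interior_Ici, closure_Ioi]
        exact hτ
    have hudP : UniqueDiffOn ℝ ((Set.univ : Set ℝ) ×ˢ S) := uniqueDiffOn_univ.prod hudS
    have hclP : ∀ p ∈ (Set.univ : Set ℝ) ×ˢ S, p ∈ closure (interior ((Set.univ : Set ℝ) ×ˢ S)) := by
      intro p hp
      rw [interior_prod_eq, closure_prod_eq]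
      exact ⟨by simp, hclS _ hp.2⟩
    have hmem : ∀ (z τ : ℝ), τ ∈ S → (z, τ) ∈ (Set.univ : Set ℝ) ×ˢ S :=
      fun z τ h => ⟨trivial, h⟩
    have hψv : ContDiffOn ℝ ∞ (fun p : ℝ × ℝ => v p.1 p.2) ((Set.univ : Set ℝ) ×ˢ S) := by
      have hPset : {p : ℝ × ℝ | 0 ≤ p.2 ∧ ENNReal.ofReal p.2 < tc} = (Set.univ : Set ℝ) ×ˢ S := by
        ext p; simp [hSdef, Set.mem_prod]
      rw [← hPset]
      exact hsmooth.of_le (by simp)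
    -- the spatial derivative fields
    set ψ1 : ℝ × ℝ → ℝ :=
      fun q => fderivWithin ℝ (fun p : ℝ × ℝ => v p.1 p.2) ((Set.univ : Set ℝ) ×ˢ S) q (1, 0) with hψ1d
    set ψ2 : ℝ × ℝ → ℝ :=
      fun q => fderivWithin ℝ ψ1 ((Set.univ : Set ℝ) ×ˢ S) q (1, 0) with hψ2d
    set ψ3 : ℝ × ℝ → ℝ :=
      fun q => fderivWithin ℝ ψ2 ((Set.univ : Set ℝ) ×ˢ S) q (1, 0) with hψ3d
    have hψ1s : ContDiffOn ℝ ∞ ψ1 ((Set.univ : Set ℝ) ×ˢ S) := D1smooth hψv hudP _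
    have hψ2s : ContDiffOn ℝ ∞ ψ2 ((Set.univ : Set ℝ) ×ˢ S) := D1smooth hψ1s hudP _
    have hψ3s : ContDiffOn ℝ ∞ ψ3 ((Set.univ : Set ℝ) ×ˢ S) := D1smooth hψ2s hudP _
    -- spatial slice derivatives
    have c1 : ∀ (z τ : ℝ), τ ∈ S → HasDerivAt (fun w => v w τ) (ψ1 (z, τ)) z := by
      intro z τ hτ
      exact sliceX ((hψv.differentiableOn hone) _ (hmem z τ hτ)) hτ
    have c1' : ∀ (z τ : ℝ), τ ∈ S → deriv (fun w => v w τ) z = ψ1 (z, τ) :=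
      fun z τ h => (c1 z τ h).deriv
    have c2 : ∀ (z τ : ℝ), τ ∈ S → HasDerivAt (fun w => ψ1 (w, τ)) (ψ2 (z, τ)) z := by
      intro z τ hτ
      exact sliceX ((hψ1s.differentiableOn hone) _ (hmem z τ hτ)) hτ
    have c3 : ∀ (z τ : ℝ), τ ∈ S → HasDerivAt (fun w => ψ2 (w, τ)) (ψ3 (z, τ)) z := by
      intro z τ hτ
      exact sliceX ((hψ2s.differentiableOn hone) _ (hmem z τ hτ)) hτ
    have c2' : ∀ (z τ : ℝ), τ ∈ S → iteratedDeriv 2 (fun w => v w τ) z = ψ2 (z, τ) := by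
      intro z τ hτ
      rw [iteratedDeriv_succ, iteratedDeriv_one]
      have hfun : deriv (fun w => v w τ) = fun w => ψ1 (w, τ) := funext fun w => c1' w τ hτ
      rw [hfun]
      exact (c2 z τ hτ).deriv
    -- derivatives of a and c
    have hA : ∀ z : ℝ, HasDerivAt a (deriv a z) z :=
      fun z => ((ha'.differentiable hone) z).hasDerivAt
    have hda : ContDiff ℝ ∞ (deriv a) := (contDiff_infty_iff_deriv.1 ha').2
    have hd2a : ContDiff ℝ ∞ (iteratedDeriv 2 a) := by
      rw [iteratedDeriv_succ, iteratedDeriv_one]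
      exact (contDiff_infty_iff_deriv.1 hda).2
    have hA1 : ∀ z : ℝ, HasDerivAt (deriv a) (iteratedDeriv 2 a z) z := by
      intro z
      rw [iteratedDeriv_succ, iteratedDeriv_one]
      exact ((hda.differentiable hone) z).hasDerivAt
    have hA2 : ∀ z : ℝ, HasDerivAt (iteratedDeriv 2 a) (iteratedDeriv 3 a z) z := by
      intro z
      rw [show iteratedDeriv 3 a = deriv (iteratedDeriv 2 a) from iteratedDeriv_succ]
      exact ((hd2a.differentiable hone) z).hasDerivAt
    have hC : ∀ z : ℝ, HasDerivAt c (deriv c z) z :=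
      fun z => ((hc'.differentiable hone) z).hasDerivAt
    have hdc : ContDiff ℝ ∞ (deriv c) := (contDiff_infty_iff_deriv.1 hc').2
    have hC1 : ∀ z : ℝ, HasDerivAt (deriv c) (iteratedDeriv 2 c z) z := by
      intro z
      rw [iteratedDeriv_succ, iteratedDeriv_one]
      exact ((hdc.differentiable hone) z).hasDerivAt
    -- spatial derivatives of compositions
    have hax : ∀ (z τ : ℝ), τ ∈ S →
        HasDerivAt (fun w => a (v w τ)) (deriv a (v z τ) * ψ1 (z, τ)) z := by
      intro z τ hτ
      simpa [Function.comp_def] using (hA (v z τ)).comp z (c1 z τ hτ)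
    have hdax : ∀ (z τ : ℝ), τ ∈ S →
        HasDerivAt (fun w => deriv a (v w τ)) (iteratedDeriv 2 a (v z τ) * ψ1 (z, τ)) z := by
      intro z τ hτ
      simpa [Function.comp_def] using (hA1 (v z τ)).comp z (c1 z τ hτ)
    have hd2ax : ∀ (z τ : ℝ), τ ∈ S →
        HasDerivAt (fun w => iteratedDeriv 2 a (v w τ)) (iteratedDeriv 3 a (v z τ) * ψ1 (z, τ)) z := by
      intro z τ hτ
      simpa [Function.comp_def] using (hA2 (v z τ)).comp z (c1 z τ hτ)
    have hcx : ∀ (z τ : ℝ), τ ∈ S →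
        HasDerivAt (fun w => c (v w τ)) (deriv c (v z τ) * ψ1 (z, τ)) z := by
      intro z τ hτ
      simpa [Function.comp_def] using (hC (v z τ)).comp z (c1 z τ hτ)
    have hdcx : ∀ (z τ : ℝ), τ ∈ S →
        HasDerivAt (fun w => deriv c (v w τ)) (iteratedDeriv 2 c (v z τ) * ψ1 (z, τ)) z := by
      intro z τ hτ
      simpa [Function.comp_def] using (hC1 (v z τ)).comp z (c1 z τ hτ)
    -- time derivatives
    have d0 : ∀ (z τ : ℝ), τ ∈ S →
        HasDerivWithinAt (fun σ => v z σ) (a (v z τ) * ψ1 (z, τ)) S τ := by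
      intro z τ hτ
      have h := hpde z τ hτ.1 hτ.2
      rwa [c1' z τ hτ] at h
    have e0 : ∀ p ∈ (Set.univ : Set ℝ) ×ˢ S,
        fderivWithin ℝ (fun p : ℝ × ℝ => v p.1 p.2) ((Set.univ : Set ℝ) ×ˢ S) p (0, 1)
          = a (v p.1 p.2) * ψ1 p := by
      rintro ⟨z, τ⟩ hp
      have h1 := sliceT (S := S) ((hψv.differentiableOn hone) _ hp)
      exact (h1.derivWithin (hudS τ hp.2)).symm.trans ((d0 z τ hp.2).derivWithin (hudS τ hp.2))
    have e1 : ∀ p ∈ (Set.univ : Set ℝ) ×ˢ S,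
        fderivWithin ℝ ψ1 ((Set.univ : Set ℝ) ×ˢ S) p (0, 1)
          = deriv a (v p.1 p.2) * ψ1 p ^ 2 + a (v p.1 p.2) * ψ2 p := by
      rintro ⟨z, τ⟩ hp
      have hτ : τ ∈ S := hp.2
      have hsw := swapD hψv hudP (hclP _ hp) hτ
      have hcg : fderivWithin ℝ (fun q => fderivWithin ℝ (fun p : ℝ × ℝ => v p.1 p.2) ((Set.univ : Set ℝ) ×ˢ S) q (0, 1)) ((Set.univ : Set ℝ) ×ˢ S) (z, τ) (1, 0)
          = fderivWithin ℝ (fun q : ℝ × ℝ => a (v q.1 q.2) * ψ1 q) ((Set.univ : Set ℝ) ×ˢ S) (z, τ) (1, 0) := by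
        rw [fderivWithin_congr (fun q hq => e0 q hq) (e0 _ hp)]
      have hgs : ContDiffOn ℝ ∞ (fun q : ℝ × ℝ => a (v q.1 q.2) * ψ1 q) ((Set.univ : Set ℝ) ×ˢ S) :=
        (ha'.comp_contDiffOn hψv).mul hψ1s
      have hX := sliceX ((hgs.differentiableOn hone) _ hp) hτ
      have hg : HasDerivAt (fun w => a (v w τ) * ψ1 (w, τ))
          (deriv a (v z τ) * ψ1 (z, τ) * ψ1 (z, τ) + a (v z τ) * ψ2 (z, τ)) z :=
        (hax z τ hτ).mul (c2 z τ hτ)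
      have hval := (hX.unique hg)
      dsimp only
      rw [hsw, hcg, hval]
      ring
    have d1 : ∀ (z τ : ℝ), τ ∈ S → HasDerivWithinAt (fun σ => ψ1 (z, σ))
        (deriv a (v z τ) * ψ1 (z, τ) ^ 2 + a (v z τ) * ψ2 (z, τ)) S τ := by
      intro z τ hτ
      have h1 := sliceT (S := S) ((hψ1s.differentiableOn hone) _ (hmem z τ hτ))
      rwa [e1 _ (hmem z τ hτ)] at h1
    have e2 : ∀ p ∈ (Set.univ : Set ℝ) ×ˢ S,
        fderivWithin ℝ ψ2 ((Set.univ : Set ℝ) ×ˢ S) p (0, 1)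
          = iteratedDeriv 2 a (v p.1 p.2) * ψ1 p ^ 3 + 3 * deriv a (v p.1 p.2) * ψ1 p * ψ2 p
            + a (v p.1 p.2) * ψ3 p := by
      rintro ⟨z, τ⟩ hp
      have hτ : τ ∈ S := hp.2
      have hsw := swapD hψ1s hudP (hclP _ hp) hτ
      have hcg : fderivWithin ℝ (fun q => fderivWithin ℝ ψ1 ((Set.univ : Set ℝ) ×ˢ S) q (0, 1)) ((Set.univ : Set ℝ) ×ˢ S) (z, τ) (1, 0)
          = fderivWithin ℝ (fun q : ℝ × ℝ => deriv a (v q.1 q.2) * ψ1 q ^ 2 + a (v q.1 q.2) * ψ2 q) ((Set.univ : Set ℝ) ×ˢ S) (z, τ) (1, 0) := by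
        rw [fderivWithin_congr (fun q hq => e1 q hq) (e1 _ hp)]
      have hgs : ContDiffOn ℝ ∞ (fun q : ℝ × ℝ => deriv a (v q.1 q.2) * ψ1 q ^ 2 + a (v q.1 q.2) * ψ2 q) ((Set.univ : Set ℝ) ×ˢ S) :=
        ((hda.comp_contDiffOn hψv).mul (hψ1s.pow 2)).add ((ha'.comp_contDiffOn hψv).mul hψ2s)
      have hX := sliceX ((hgs.differentiableOn hone) _ hp) hτ
      have hg := ((hdax z τ hτ).mul ((c2 z τ hτ).pow 2)).add ((hax z τ hτ).mul (c3 z τ hτ))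
      have hval := hX.unique hg
      dsimp only
      rw [hsw, hcg, hval]
      simp only [Pi.pow_apply]
      ring
    have d2 : ∀ (z τ : ℝ), τ ∈ S → HasDerivWithinAt (fun σ => ψ2 (z, σ))
        (iteratedDeriv 2 a (v z τ) * ψ1 (z, τ) ^ 3 + 3 * deriv a (v z τ) * ψ1 (z, τ) * ψ2 (z, τ)
          + a (v z τ) * ψ3 (z, τ)) S τ := by
      intro z τ hτ
      have h1 := sliceT (S := S) ((hψ2s.differentiableOn hone) _ (hmem z τ hτ))
      rwa [e2 _ (hmem z τ hτ)] at h1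
    -- time derivatives of compositions
    have hat : ∀ (z τ : ℝ), τ ∈ S →
        HasDerivWithinAt (fun σ => a (v z σ)) (deriv a (v z τ) * (a (v z τ) * ψ1 (z, τ))) S τ := by
      intro z τ hτ
      simpa [Function.comp_def] using (hA (v z τ)).comp_hasDerivWithinAt τ (d0 z τ hτ)
    have hdat : ∀ (z τ : ℝ), τ ∈ S →
        HasDerivWithinAt (fun σ => deriv a (v z σ)) (iteratedDeriv 2 a (v z τ) * (a (v z τ) * ψ1 (z, τ))) S τ := by
      intro z τ hτ
      simpa [Function.comp_def] using (hA1 (v z τ)).comp_hasDerivWithinAt τ (d0 z τ hτ)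
    have hd2at : ∀ (z τ : ℝ), τ ∈ S →
        HasDerivWithinAt (fun σ => iteratedDeriv 2 a (v z σ)) (iteratedDeriv 3 a (v z τ) * (a (v z τ) * ψ1 (z, τ))) S τ := by
      intro z τ hτ
      simpa [Function.comp_def] using (hA2 (v z τ)).comp_hasDerivWithinAt τ (d0 z τ hτ)
    have hct : ∀ (z τ : ℝ), τ ∈ S →
        HasDerivWithinAt (fun σ => c (v z σ)) (deriv c (v z τ) * (a (v z τ) * ψ1 (z, τ))) S τ := by
      intro z τ hτ
      simpa [Function.comp_def] using (hC (v z τ)).comp_hasDerivWithinAt τ (d0 z τ hτ)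
    have hdct : ∀ (z τ : ℝ), τ ∈ S →
        HasDerivWithinAt (fun σ => deriv c (v z σ)) (iteratedDeriv 2 c (v z τ) * (a (v z τ) * ψ1 (z, τ))) S τ := by
      intro z τ hτ
      simpa [Function.comp_def] using (hC1 (v z τ)).comp_hasDerivWithinAt τ (d0 z τ hτ)
    -- the potential function
    set ψQ : ℝ × ℝ → ℝ := fun p =>
      ((deriv c (v p.1 p.2) * deriv a (v p.1 p.2) + c (v p.1 p.2) * iteratedDeriv 2 a (v p.1 p.2))
          * ψ1 p ^ 2
        + 2 * c (v p.1 p.2) * deriv a (v p.1 p.2) * ψ2 p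
        + p.2 * c (v p.1 p.2) * deriv a (v p.1 p.2) ^ 2 * ψ1 p * ψ2 p
        + p.2 * deriv c (v p.1 p.2) * deriv a (v p.1 p.2) ^ 2 * ψ1 p ^ 3)
      / (1 + p.2 * deriv a (v p.1 p.2) * ψ1 p) ^ 2 with hψQd
    set ψΦ : ℝ × ℝ → ℝ := fun p => p.2 / 2 * ψQ p with hψΦd
    have hDpos : ∀ p ∈ (Set.univ : Set ℝ) ×ˢ S,
        0 < 1 + p.2 * deriv a (v p.1 p.2) * ψ1 p := by
      rintro ⟨z, τ⟩ hp
      have hτ : τ ∈ S := hp.2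
      have h := hpos z τ hτ.1 hτ.2
      rw [c1' z τ hτ] at h
      simpa using h
    have hsnd : ContDiffOn ℝ ∞ (fun p : ℝ × ℝ => p.2) ((Set.univ : Set ℝ) ×ˢ S) :=
      contDiff_snd.contDiffOn
    have hCp : ContDiffOn ℝ ∞ (fun p : ℝ × ℝ => c (v p.1 p.2)) ((Set.univ : Set ℝ) ×ˢ S) :=
      hc'.comp_contDiffOn hψv
    have hdCp : ContDiffOn ℝ ∞ (fun p : ℝ × ℝ => deriv c (v p.1 p.2)) ((Set.univ : Set ℝ) ×ˢ S) :=
      hdc.comp_contDiffOn hψv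
    have hdAp : ContDiffOn ℝ ∞ (fun p : ℝ × ℝ => deriv a (v p.1 p.2)) ((Set.univ : Set ℝ) ×ˢ S) :=
      hda.comp_contDiffOn hψv
    have hd2Ap : ContDiffOn ℝ ∞ (fun p : ℝ × ℝ => iteratedDeriv 2 a (v p.1 p.2)) ((Set.univ : Set ℝ) ×ˢ S) :=
      hd2a.comp_contDiffOn hψv
    have hψQs : ContDiffOn ℝ ∞ ψQ ((Set.univ : Set ℝ) ×ˢ S) := by
      rw [hψQd]
      exact ContDiffOn.div
        (((((hdCp.mul hdAp).add (hCp.mul hd2Ap)).mul (hψ1s.pow 2)).add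
            (((contDiffOn_const.mul hCp).mul hdAp).mul hψ2s)).add
          ((((hsnd.mul hCp).mul (hdAp.pow 2)).mul hψ1s).mul hψ2s) |>.add
          (((hsnd.mul hdCp).mul (hdAp.pow 2)).mul (hψ1s.pow 3)))
        ((contDiffOn_const.add ((hsnd.mul hdAp).mul hψ1s)).pow 2)
        (fun p hp => pow_ne_zero 2 (ne_of_gt (hDpos p hp)))
    have hψΦs : ContDiffOn ℝ ∞ ψΦ ((Set.univ : Set ℝ) ×ˢ S) := by
      rw [hψΦd]
      exact (hsnd.div_const 2).mul hψQs
    -- the core identity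
    have core : ∀ (z τ : ℝ), τ ∈ S →
        fderivWithin ℝ ψΦ ((Set.univ : Set ℝ) ×ˢ S) (z, τ) (0, 1)
        = a (v z τ) * fderivWithin ℝ ψΦ ((Set.univ : Set ℝ) ×ˢ S) (z, τ) (1, 0)
          + c (v z τ) * deriv a (v z τ) * ψ2 (z, τ)
          + 1 / 2 * (c (v z τ) * iteratedDeriv 2 a (v z τ) + deriv c (v z τ) * deriv a (v z τ))
            * ψ1 (z, τ) ^ 2 := by
      intro z τ hτ
      have hp := hmem z τ hτ
      have hDne : (1 + τ * deriv a (v z τ) * ψ1 (z, τ)) ≠ 0 := by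
        have := hDpos _ hp; simp only at this; linarith
      have hD2ne : (1 + τ * deriv a (v z τ) * ψ1 (z, τ)) ^ 2 ≠ 0 := pow_ne_zero _ hDne
      -- spatial slice derivative of ψΦ
      have hNx := (((((hdcx z τ hτ).mul (hdax z τ hτ)).add ((hcx z τ hτ).mul (hd2ax z τ hτ))).mul
            ((c2 z τ hτ).pow 2)).add
          ((((hcx z τ hτ).const_mul 2).mul (hdax z τ hτ)).mul (c3 z τ hτ))).add
          (((((hcx z τ hτ).const_mul τ).mul ((hdax z τ hτ).pow 2)).mul (c2 z τ hτ)).mul (c3 z τ hτ)) |>.add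
          ((((hdcx z τ hτ).const_mul τ).mul ((hdax z τ hτ).pow 2)).mul ((c2 z τ hτ).pow 3))
      have hDx := ((((hdax z τ hτ).const_mul τ).mul (c2 z τ hτ)).const_add 1)
      have hXc := (hNx.div (hDx.pow 2) hD2ne).const_mul (τ / 2)
      have hXs := sliceX (S := S) (ψ := ψΦ) ((hψΦs.differentiableOn hone) _ hp) hτ
      have hXfun : (fun w => ψΦ (w, τ)) = (fun w =>
          τ / 2 * (((deriv c (v w τ) * deriv a (v w τ) + c (v w τ) * iteratedDeriv 2 a (v w τ))
              * ψ1 (w, τ) ^ 2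
            + 2 * c (v w τ) * deriv a (v w τ) * ψ2 (w, τ)
            + τ * c (v w τ) * deriv a (v w τ) ^ 2 * ψ1 (w, τ) * ψ2 (w, τ)
            + τ * deriv c (v w τ) * deriv a (v w τ) ^ 2 * ψ1 (w, τ) ^ 3)
          / (1 + τ * deriv a (v w τ) * ψ1 (w, τ)) ^ 2)) := by
        funext w; rw [hψΦd, hψQd]
      rw [hXfun] at hXs
      have eX := hXs.unique hXc
      -- time slice derivative of ψΦ
      have hNt := (((((hdct z τ hτ).mul (hdat z τ hτ)).add ((hct z τ hτ).mul (hd2at z τ hτ))).mul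
            ((d1 z τ hτ).pow 2)).add
          ((((hct z τ hτ).const_mul 2).mul (hdat z τ hτ)).mul (d2 z τ hτ))).add
          (((((hasDerivWithinAt_id τ S).mul (hct z τ hτ)).mul ((hdat z τ hτ).pow 2)).mul (d1 z τ hτ)).mul (d2 z τ hτ)) |>.add
          ((((hasDerivWithinAt_id τ S).mul (hdct z τ hτ)).mul ((hdat z τ hτ).pow 2)).mul ((d1 z τ hτ).pow 3))
      have hDt := ((((hasDerivWithinAt_id τ S).mul (hdat z τ hτ)).mul (d1 z τ hτ)).const_add 1)
      have hTc := ((hasDerivWithinAt_id τ S).div_const 2).mul (hNt.div (hDt.pow 2) hD2ne)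
      have hTs := sliceT (S := S) (ψ := ψΦ) ((hψΦs.differentiableOn hone) _ hp)
      have hTfun : (fun σ => ψΦ (z, σ)) = (fun σ =>
          σ / 2 * (((deriv c (v z σ) * deriv a (v z σ) + c (v z σ) * iteratedDeriv 2 a (v z σ))
              * ψ1 (z, σ) ^ 2
            + 2 * c (v z σ) * deriv a (v z σ) * ψ2 (z, σ)
            + σ * c (v z σ) * deriv a (v z σ) ^ 2 * ψ1 (z, σ) * ψ2 (z, σ)
            + σ * deriv c (v z σ) * deriv a (v z σ) ^ 2 * ψ1 (z, σ) ^ 3)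
          / (1 + σ * deriv a (v z σ) * ψ1 (z, σ)) ^ 2)) := by
        funext σ; rw [hψΦd, hψQd]
      rw [hTfun] at hTs
      have eT := (hTs.derivWithin (hudS τ hτ)).symm.trans (hTc.derivWithin (hudS τ hτ))
      rw [eT, eX]
      simp only [Pi.pow_apply, Pi.mul_apply, Pi.add_apply, Pi.div_apply, id_eq, Nat.reduceSub, Nat.cast_ofNat]
      field_simp
      have hD3 : (1 + deriv a (v z τ) * ψ1 (z, τ) * τ) ^ 3 ≠ 0 := pow_ne_zero 3 (by
        rw [show deriv a (v z τ) * ψ1 (z, τ) * τ = τ * deriv a (v z τ) * ψ1 (z, τ) by ring]; exact hDne)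
      rw [div_add' _ _ _ hD3, div_add' _ _ _ hD3, div_eq_div_iff hD3 hD3]
      ring
    -- identification of v1 with the spatial derivative of ψΦ
    have hv1eq : ∀ (z τ : ℝ), τ ∈ S →
        v1 z τ = fderivWithin ℝ ψΦ ((Set.univ : Set ℝ) ×ˢ S) (z, τ) (1, 0) := by
      intro z τ hτ
      have hp := hmem z τ hτ
      rw [hv1 z τ]
      have hfun : (fun w : ℝ =>
          ((deriv c (v w τ) * deriv a (v w τ) + c (v w τ) * iteratedDeriv 2 a (v w τ))
              * (deriv (fun u => v u τ) w) ^ 2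
            + 2 * c (v w τ) * deriv a (v w τ) * iteratedDeriv 2 (fun u => v u τ) w
            + τ * c (v w τ) * (deriv a (v w τ)) ^ 2
              * deriv (fun u => v u τ) w * iteratedDeriv 2 (fun u => v u τ) w
            + τ * deriv c (v w τ) * (deriv a (v w τ)) ^ 2 * (deriv (fun u => v u τ) w) ^ 3)
          / (1 + τ * deriv a (v w τ) * deriv (fun u => v u τ) w) ^ 2) = fun w => ψQ (w, τ) := by
        funext w
        rw [c1' w τ hτ, c2' w τ hτ, hψQd]
      rw [hfun]
      have hq := sliceX (S := S) (ψ := ψQ) ((hψQs.differentiableOn hone) _ hp) hτ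
      rw [hq.deriv]
      have hΦx : HasDerivAt (fun w => ψΦ (w, τ))
          (τ / 2 * fderivWithin ℝ ψQ ((Set.univ : Set ℝ) ×ˢ S) (z, τ) (1, 0)) z := by
        have h := hq.const_mul (τ / 2)
        have hfun2 : (fun w => ψΦ (w, τ)) = fun w => τ / 2 * ψQ (w, τ) := by
          funext w; rw [hψΦd]
        rw [hfun2]
        exact h
      exact hΦx.unique (sliceX (S := S) (ψ := ψΦ) ((hψΦs.differentiableOn hone) _ hp) hτ)
    -- final assembly
    set XΦ : ℝ × ℝ → ℝ :=
      fun q => fderivWithin ℝ ψΦ ((Set.univ : Set ℝ) ×ˢ S) q (1, 0) with hXΦd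
    set WΦ : ℝ × ℝ → ℝ :=
      fun q => fderivWithin ℝ ψΦ ((Set.univ : Set ℝ) ×ˢ S) q (0, 1) with hWΦd
    have hXΦs : ContDiffOn ℝ ∞ XΦ ((Set.univ : Set ℝ) ×ˢ S) := D1smooth hψΦs hudP _
    have hWΦs : ContDiffOn ℝ ∞ WΦ ((Set.univ : Set ℝ) ×ˢ S) := D1smooth hψΦs hudP _
    have hp := hmem x t ht
    have hGfun : (fun y : ℝ =>
        a (v y t) * v1 y t
        + c (v y t) * deriv a (v y t) * iteratedDeriv 2 (fun z => v z t) y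
        + 1 / 2 * (c (v y t) * iteratedDeriv 2 a (v y t)
            + deriv c (v y t) * deriv a (v y t)) * (deriv (fun z => v z t) y) ^ 2)
        = fun y => WΦ (y, t) := by
      funext y
      rw [c1' y t ht, c2' y t ht, hv1eq y t ht, hWΦd]
      exact (core y t ht).symm
    rw [hGfun]
    have hWx := sliceX (S := S) (ψ := WΦ) ((hWΦs.differentiableOn hone) _ hp) ht
    rw [hWx.deriv]
    have hswap : fderivWithin ℝ WΦ ((Set.univ : Set ℝ) ×ˢ S) (x, t) (1, 0)
        = fderivWithin ℝ XΦ ((Set.univ : Set ℝ) ×ˢ S) (x, t) (0, 1) := by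
      rw [hWΦd, hXΦd]
      exact (swapD hψΦs hudP (hclP _ hp) ht).symm
    rw [hswap]
    have hfinal := sliceT (S := S) (ψ := XΦ) ((hXΦs.differentiableOn hone) _ hp)
    exact hfinal.congr (fun τ hτ => by rw [hXΦd]; exact hv1eq x τ hτ)
      (by rw [hXΦd]; exact hv1eq x t ht)
end
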